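/- Capacity sandwich bound in the α = γ case: with C = ∑_{i=1}^k ω_i where ω_i = (n_I − h_i)β_I + (n − i − n_I + h_i)β_c, and C̲ = (k/2)·[(n_I−1)β_I + (2n − n_I − k)β_c], one has C̲ ≤ C ≤ C̲ + n_I²(β_I − β_c)/8, whenever β_I ≥ β_c ≥ 0. -/
import Mathlib

private lemma gauss_icc (m : ℕ) : (∑ i ∈ Finset.Icc 1 m, i) * 2 = m * (m + 1) := by
  induction m with
  | zero => simp
  | succ p ih =>
    rw [Finset.sum_Icc_succ_top (by omega), add_mul, ih]
    ring

private lemma sum_partition {M : Type*} [AddCommMonoid M] (G : ℕ → ℕ) (F : ℕ → M)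
    (hG0 : G 0 = 0) (hmono : Monotone G) (N : ℕ) :
    ∑ i ∈ Finset.Ioc 0 (G N), F i
      = ∑ s ∈ Finset.Icc 1 N, ∑ i ∈ Finset.Ioc (G (s - 1)) (G s), F i := by
  induction N with
  | zero => simp [hG0]
  | succ N ih =>
    rw [Finset.sum_Icc_succ_top (by omega),
      ← Finset.sum_Ioc_consecutive F (hG0 ▸ hmono (Nat.zero_le N)) (hmono (Nat.le_succ N)),
      ih]
    simp

/-- Capacity sandwich bound in the `α = γ` case:
with `C = ∑_{i=1}^k [(n_I − h_i)β_I + (n − i − n_I + h_i)β_c]` and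
`C̲ = (k/2)[(n_I−1)β_I + (2n − n_I − k)β_c]`, one has
`C̲ ≤ C ≤ C̲ + n_I²(β_I − β_c)/8` whenever `β_I ≥ β_c ≥ 0`. -/
theorem capacity_sandwich (n nI k L : ℕ) (βI βc : ℝ) (hL : 2 ≤ L) (hn : n = nI * L)
    (hnI : 2 ≤ nI) (hk : nI < k) (hkn : k ≤ n) (hβc : 0 ≤ βc) (hβ : βc ≤ βI)
    (g h : ℕ → ℕ)
    (hg : ∀ m, g m = if m ≤ k % nI then k / nI + 1 else k / nI)
    (hh : ∀ t, h t = sInf {s : ℕ | s ∈ Finset.Icc 1 nI ∧ t ≤ ∑ l ∈ Finset.Icc 1 s, g l}) :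
    ((k : ℝ) / 2) * (((nI : ℝ) - 1) * βI + (2 * (n : ℝ) - nI - k) * βc)
      ≤ ∑ i ∈ Finset.Icc 1 k,
          (((nI : ℝ) - h i) * βI + ((n : ℝ) - i - nI + h i) * βc) ∧
    ∑ i ∈ Finset.Icc 1 k,
        (((nI : ℝ) - h i) * βI + ((n : ℝ) - i - nI + h i) * βc)
      ≤ ((k : ℝ) / 2) * (((nI : ℝ) - 1) * βI + (2 * (n : ℝ) - nI - k) * βc)
          + (nI : ℝ) ^ 2 * (βI - βc) / 8 := by
  obtain ⟨q, hq⟩ : ∃ q, q = k / nI := ⟨_, rfl⟩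
  obtain ⟨r, hr⟩ : ∃ r, r = k % nI := ⟨_, rfl⟩
  obtain ⟨G, hGdef⟩ : ∃ G : ℕ → ℕ, G = fun s => ∑ l ∈ Finset.Icc 1 s, g l := ⟨_, rfl⟩
  have hg' : ∀ m, g m = if m ≤ r then q + 1 else q := by
    intro m; rw [hg, hq, hr]
  have hk_eq : k = nI * q + r := by
    rw [hq, hr]; exact (Nat.div_add_mod k nI).symm
  have hr_lt : r < nI := hr ▸ Nat.mod_lt k (by omega)
  have hq1 : 1 ≤ q := by
    rw [hq]; exact (Nat.one_le_div_iff (by omega)).2 (le_of_lt hk)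
  have hGval : ∀ s, G s = s * q + min s r := by
    intro s
    induction s with
    | zero => simp [hGdef]
    | succ m ih =>
      have hstep : G (m + 1) = G m + g (m + 1) := by
        simp [hGdef, Finset.sum_Icc_succ_top (by omega : 1 ≤ m + 1)]
      rw [hstep, ih, hg', Nat.succ_mul]
      split <;> omega
  have hGmono : Monotone G := by
    intro a b hab
    rw [hGval, hGval]
    have := Nat.mul_le_mul_right q hab
    omega
  have hG0 : G 0 = 0 := by simp [hGval]
  have hGnI : G nI = k := by rw [hGval]; omega
  have hh' : ∀ t, h t = sInf {s : ℕ | s ∈ Finset.Icc 1 nI ∧ t ≤ G s} := by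
    intro t; rw [hh]; simp [hGdef]
  -- the value of h on the block (G (s-1), G s]
  have hhval : ∀ s, 1 ≤ s → s ≤ nI → ∀ i, G (s - 1) < i → i ≤ G s → h i = s := by
    intro s hs1 hs2 i hi1 hi2
    rw [hh']
    have hmem : s ∈ {t : ℕ | t ∈ Finset.Icc 1 nI ∧ i ≤ G t} :=
      ⟨Finset.mem_Icc.2 ⟨hs1, hs2⟩, hi2⟩
    have h1 := Nat.sInf_mem ⟨s, hmem⟩
    have h2 := Nat.sInf_le hmem
    obtain ⟨ht, hti⟩ := h1
    rw [Finset.mem_Icc] at ht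
    by_contra hne2
    have hlt : sInf {t : ℕ | t ∈ Finset.Icc 1 nI ∧ i ≤ G t} ≤ s - 1 := by omega
    have := hGmono hlt
    omega
  -- sum of h over [1, k]
  have hsum_nat : ∑ i ∈ Finset.Icc 1 k, h i = ∑ s ∈ Finset.Icc 1 nI, s * g s := by
    have : (Finset.Icc 1 k) = Finset.Ioc 0 (G nI) := by
      rw [hGnI]; exact Finset.Icc_add_one_left_eq_Ioc 0 k
    rw [this, sum_partition G h hG0 hGmono nI]
    refine Finset.sum_congr rfl ?_
    intro s hs
    rw [Finset.mem_Icc] at hs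
    have hconst : ∀ i ∈ Finset.Ioc (G (s - 1)) (G s), h i = s := by
      intro i hi
      rw [Finset.mem_Ioc] at hi
      exact hhval s hs.1 hs.2 i hi.1 hi.2
    rw [Finset.sum_congr rfl hconst, Finset.sum_const, Nat.card_Ioc, smul_eq_mul]
    have hgs : G s - G (s - 1) = g s := by
      obtain ⟨m, rfl⟩ : ∃ m, s = m + 1 := ⟨s - 1, by omega⟩
      simp only [Nat.add_sub_cancel, hGval, hg', Nat.succ_mul]
      split <;> omega
    rw [hgs, Nat.mul_comm]
  have hsplit : (∑ s ∈ Finset.Icc 1 nI, s * g s) * 2 = q * (nI * (nI + 1)) + r * (r + 1) := by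
    have hterm : ∀ s ∈ Finset.Icc 1 nI, s * g s = s * q + (if s ≤ r then s else 0) := by
      intro s _; rw [hg']; split <;> ring
    rw [Finset.sum_congr rfl hterm, Finset.sum_add_distrib, ← Finset.sum_mul]
    have hite : ∑ s ∈ Finset.Icc 1 nI, (if s ≤ r then s else 0) = ∑ s ∈ Finset.Icc 1 r, s := by
      rw [← Finset.sum_subset (Finset.Icc_subset_Icc_right (le_of_lt hr_lt))]
      · exact Finset.sum_congr rfl fun s hs => by
          rw [Finset.mem_Icc] at hs; simp [hs.2]
      · intro x hx hxn
        rw [Finset.mem_Icc] at hx hxn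
        have : ¬ x ≤ r := by omega
        simp [this]
    rw [hite]
    rw [← gauss_icc nI, ← gauss_icc r]
    ring
  -- real versions
  have hSr : ∑ i ∈ Finset.Icc 1 k, (h i : ℝ)
      = ((q : ℝ) * (nI * (nI + 1)) + r * (r + 1)) / 2 := by
    have : ((∑ i ∈ Finset.Icc 1 k, h i : ℕ) : ℝ) * 2
        = (q : ℝ) * (nI * (nI + 1)) + r * (r + 1) := by
      rw [hsum_nat]; exact_mod_cast congrArg (Nat.cast (R := ℝ)) hsplit
    push_cast at this ⊢
    linarith
  have hk2 : ∑ i ∈ Finset.Icc 1 k, (i : ℝ) = (k : ℝ) * (k + 1) / 2 := by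
    have := gauss_icc k
    have : ((∑ i ∈ Finset.Icc 1 k, i : ℕ) : ℝ) * 2 = (k : ℝ) * (k + 1) := by
      exact_mod_cast congrArg (Nat.cast (R := ℝ)) this
    push_cast at this ⊢
    linarith
  -- closed form for the capacity sum
  have hkR : (k : ℝ) = (nI : ℝ) * q + r := by exact_mod_cast hk_eq
  have hCval : ∑ i ∈ Finset.Icc 1 k, (((nI : ℝ) - h i) * βI + ((n : ℝ) - i - nI + h i) * βc)
      = ((k : ℝ) / 2) * (((nI : ℝ) - 1) * βI + (2 * (n : ℝ) - nI - k) * βc)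
        + (r : ℝ) * ((nI : ℝ) - r) / 2 * (βI - βc) := by
    have hexp : ∀ i ∈ Finset.Icc 1 k,
        ((nI : ℝ) - h i) * βI + ((n : ℝ) - i - nI + h i) * βc
          = ((nI : ℝ) * βI + ((n : ℝ) - nI) * βc) - (i : ℝ) * βc - (h i : ℝ) * (βI - βc) := by
      intro i _; ring
    rw [Finset.sum_congr rfl hexp, Finset.sum_sub_distrib, Finset.sum_sub_distrib,
      Finset.sum_const, ← Finset.sum_mul, ← Finset.sum_mul, hSr, hk2, Nat.card_Icc]
    have hcard : ((k + 1 - 1 : ℕ) : ℝ) = (k : ℝ) := by norm_num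
    rw [nsmul_eq_mul, hcard, hkR]
    ring
  have hrR : (r : ℝ) ≤ (nI : ℝ) := by exact_mod_cast le_of_lt hr_lt
  have hr0 : (0 : ℝ) ≤ (r : ℝ) := Nat.cast_nonneg r
  constructor
  · rw [hCval]
    have : (0 : ℝ) ≤ (r : ℝ) * ((nI : ℝ) - r) / 2 * (βI - βc) := by
      apply mul_nonneg
      · apply div_nonneg _ (by norm_num)
        exact mul_nonneg hr0 (by linarith)
      · linarith
    linarith
  · rw [hCval]
    nlinarith [mul_nonneg (sq_nonneg ((nI : ℝ) - 2 * r)) (sub_nonneg.2 hβ)]
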